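/- Pareto reduction can be applied on both arguments: with the hypotheses of the previous lemma, for any finite subsets X, X' ⊆ V_D × V_A, min_⊑(ψ(X, X')) = min_⊑(ψ(min_⊑(X), min_⊑(X'))). -/

import Mathlib

/-- Pareto dominance on `V_D × V_A`: `(s₁,t₁) ⊑ (s₂,t₂)` iff `s₁ ⪯_D s₂` and
`t₂ ⪯_A t₁`. -/
def paretoDom {VD VA : Type*} [LinearOrder VD] [LinearOrder VA]
    (p q : VD × VA) : Prop :=
  p.1 ≤ q.1 ∧ q.2 ≤ p.2

/-- The set of Pareto optimal (non-dominated) elements of `S`. -/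
def paretoMin {VD VA : Type*} [LinearOrder VD] [LinearOrder VA]
    (S : Set (VD × VA)) : Set (VD × VA) :=
  {x ∈ S | ∀ x' ∈ S, paretoDom x' x → x' = x}

lemma paretoDom_refl {VD VA : Type*} [LinearOrder VD] [LinearOrder VA]
    (p : VD × VA) : paretoDom p p := ⟨le_refl _, le_refl _⟩

lemma paretoDom_trans {VD VA : Type*} [LinearOrder VD] [LinearOrder VA]
    {p q r : VD × VA} (h₁ : paretoDom p q) (h₂ : paretoDom q r) :
    paretoDom p r := ⟨h₁.1.trans h₂.1, h₂.2.trans h₁.2⟩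

lemma paretoDom_antisymm {VD VA : Type*} [LinearOrder VD] [LinearOrder VA]
    {p q : VD × VA} (h₁ : paretoDom p q) (h₂ : paretoDom q p) : p = q :=
  Prod.ext (le_antisymm h₁.1 h₂.1) (le_antisymm h₂.2 h₁.2)

/-- In a finite set, every element is dominated by a Pareto-minimal element. -/
lemma exists_paretoMin_dom {VD VA : Type*} [LinearOrder VD] [LinearOrder VA]
    {S : Set (VD × VA)} (hS : S.Finite) {x : VD × VA} (hx : x ∈ S) :
    ∃ m ∈ paretoMin S, paretoDom m x := by
  set S' : Set (VD × VA) := {y ∈ S | paretoDom y x} with hS'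
  have hS'fin : S'.Finite := hS.subset (fun y hy => hy.1)
  have hS'ne : S'.Nonempty := ⟨x, hx, paretoDom_refl x⟩
  obtain ⟨m, hm, hmin'⟩ := hS'fin.exists_minimalFor
    (fun p => (p.1, OrderDual.toDual p.2)) S' hS'ne
  have hmin : ∀ z ∈ S', (fun p : VD × VA => (p.1, OrderDual.toDual p.2)) z ≤
      (fun p : VD × VA => (p.1, OrderDual.toDual p.2)) m →
      (fun p : VD × VA => (p.1, OrderDual.toDual p.2)) m =
      (fun p : VD × VA => (p.1, OrderDual.toDual p.2)) z :=
    fun z hz h => le_antisymm (hmin' hz h) h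
  refine ⟨m, ⟨hm.1, ?_⟩, hm.2⟩
  intro z hz hdom
  have hz' : z ∈ S' := ⟨hz, paretoDom_trans hdom hm.2⟩
  have hle : (fun p : VD × VA => (p.1, OrderDual.toDual p.2)) z ≤
      (fun p : VD × VA => (p.1, OrderDual.toDual p.2)) m :=
    ⟨hdom.1, hdom.2⟩
  have := hmin z hz' hle
  exact Prod.ext (congrArg Prod.fst this).symm (congrArg Prod.snd this).symm

/-- If `T' ⊆ T` and every element of `T` is dominated by some element of `T'`,
then the Pareto minima coincide. -/
lemma paretoMin_eq_of_subset {VD VA : Type*} [LinearOrder VD] [LinearOrder VA]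
    {T T' : Set (VD × VA)} (hsub : T' ⊆ T)
    (hdom : ∀ y ∈ T, ∃ z ∈ T', paretoDom z y) :
    paretoMin T = paretoMin T' := by
  ext x
  constructor
  · rintro ⟨hxT, hmin⟩
    obtain ⟨z, hzT', hzx⟩ := hdom x hxT
    have hzx' : z = x := hmin z (hsub hzT') hzx
    subst hzx'
    exact ⟨hzT', fun y hy h => hmin y (hsub hy) h⟩
  · rintro ⟨hxT', hmin⟩
    refine ⟨hsub hxT', fun y hy hyx => ?_⟩
    obtain ⟨z, hzT', hzy⟩ := hdom y hy
    have hzx : z = x := hmin z hzT' (paretoDom_trans hzy hyx)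
    subst hzx
    exact paretoDom_antisymm hyx hzy

/-- Pareto reduction can be applied on both arguments:
with the hypotheses of Lemma 2,

`min_⊑(ψ(X, X')) = min_⊑(ψ(min_⊑(X), min_⊑(X')))`. -/
theorem paretoMin_psi_both
    {VD VA : Type*} [LinearOrder VD] [LinearOrder VA]
    (otimesD : VD → VD → VD) (circ : VA → VA → VA)
    (hD₁ : ∀ x y z : VD, x ≤ y → otimesD x z ≤ otimesD y z)
    (hD₂ : ∀ x y z : VD, x ≤ y → otimesD z x ≤ otimesD z y)
    (hA₁ : ∀ x y z : VA, x ≤ y → circ x z ≤ circ y z)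
    (hA₂ : ∀ x y z : VA, x ≤ y → circ z x ≤ circ z y)
    (X X' : Set (VD × VA)) (hX : X.Finite) (hX' : X'.Finite) :
    paretoMin (Set.image2 (fun p q => (otimesD p.1 q.1, circ p.2 q.2)) X X') =
      paretoMin (Set.image2 (fun p q => (otimesD p.1 q.1, circ p.2 q.2))
        (paretoMin X) (paretoMin X')) := by
  apply paretoMin_eq_of_subset
  · exact Set.image2_subset (fun p hp => hp.1) (fun q hq => hq.1)
  · rintro y ⟨p, hp, q, hq, rfl⟩
    obtain ⟨p', hp', hpp⟩ := exists_paretoMin_dom hX hp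
    obtain ⟨q', hq', hqq⟩ := exists_paretoMin_dom hX' hq
    refine ⟨(otimesD p'.1 q'.1, circ p'.2 q'.2),
      Set.mem_image2_of_mem hp' hq', ?_⟩
    exact ⟨(hD₁ _ _ _ hpp.1).trans (hD₂ _ _ _ hqq.1),
      (hA₁ _ _ _ hpp.2).trans (hA₂ _ _ _ hqq.2)⟩
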